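/- Let ≺ be a reflection order on the affine positive root system Φ⁺_W and let α be an initial root (i.e., α ∈ Ψ⁺_{W₀,≺}). Then there exists p ≥ 0 such that for all q ≥ p, the closed interval [(−α)₀+(q+1)δ, (−α)₀+qδ] with respect to ≺ is finite. -/

import Mathlib

/-!
Each root string `γ₀ + nδ` is monotone for `≺`: `γ₀ + (n+1)δ` is the midpoint of its neighbours,
and initial sections of `≺` are biclosed, so it lies between them. For an initial root `α` the
string `b q = (−α)₀ + qδ` decreases. Distinct intervals `[b (q+1), b q]` share at most an
endpoint, while an injective monotone string meeting an interval infinitely often has a whole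
tail inside it. Hence each of the finitely many strings is infinite in at most one interval, and
beyond these exceptional `q` every interval meets every string in a finite set.
-/

variable {V : Type*} [AddCommGroup V] [Module ℝ V]

/-- `S` is closed in the root set `Γ`: any positive combination of two elements of `S`
that is again in `Γ` lies in `S`. -/
def IsClosedIn {W : Type*} [AddCommGroup W] [Module ℝ W] (Γ S : Set W) : Prop :=
  ∀ a ∈ S, ∀ b ∈ S, ∀ k₁ k₂ : ℝ, 0 < k₁ → 0 < k₂ →
    k₁ • a + k₂ • b ∈ Γ → k₁ • a + k₂ • b ∈ S

/-- `S ⊆ Γ` is biclosed in `Γ` if both `S` and `Γ \ S` are closed. -/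
def IsBiclosedIn {W : Type*} [AddCommGroup W] [Module ℝ W] (Γ S : Set W) : Prop :=
  S ⊆ Γ ∧ IsClosedIn Γ S ∧ IsClosedIn Γ (Γ \ S)

/-- The affine positive root system `Φ⁺_W = {α + nδ : α ∈ Φ₀⁺, n ≥ 0} ∪
{α + nδ : α ∈ Φ₀⁻, n > 0}`, realized in `V × ℝ` with `δ = (0,1)`. -/
def AffPos (Φ₀ Φpos : Set V) : Set (V × ℝ) :=
  {x | (∃ α ∈ Φpos, ∃ n : ℕ, x = (α, (n : ℝ))) ∨
       (∃ α ∈ Φ₀ \ Φpos, ∃ n : ℕ, x = (α, (n : ℝ) + 1))}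

open Classical in
/-- The affine root `α₀ + nδ`, where `α₀ = α` if `α ∈ Φ₀⁺` and `α₀ = α + δ` otherwise. -/
noncomputable def affRoot (Φpos : Set V) (α : V) (n : ℕ) : V × ℝ :=
  (α, (if α ∈ Φpos then (0 : ℝ) else 1) + n)

/-- `r` is a reflection order on `Φ⁺_W`: a (strict) total order on `Φ⁺_W` all of whose
initial intervals are biclosed in `Φ⁺_W`. -/
def IsReflOrder (Φ₀ Φpos : Set V) (r : V × ℝ → V × ℝ → Prop) : Prop :=
  (∀ x ∈ AffPos Φ₀ Φpos, ¬ r x x) ∧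
  (∀ x ∈ AffPos Φ₀ Φpos, ∀ y ∈ AffPos Φ₀ Φpos, ∀ z ∈ AffPos Φ₀ Φpos,
    r x y → r y z → r x z) ∧
  (∀ x ∈ AffPos Φ₀ Φpos, ∀ y ∈ AffPos Φ₀ Φpos, x ≠ y → r x y ∨ r y x) ∧
  (∀ S ⊆ AffPos Φ₀ Φpos,
    (∀ x ∈ S, ∀ y ∈ AffPos Φ₀ Φpos, r y x → y ∈ S) →
      IsBiclosedIn (AffPos Φ₀ Φpos) S)

open Filter Set

section Intervals

variable {α : Type*} [PartialOrder α]

theorem eventually_mem_of_infinite_preimage {f : ℕ → α} (hf : Monotone f ∨ Antitone f)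
    {s : Set α} (hs : s.OrdConnected) (h : (f ⁻¹' s).Infinite) : ∀ᶠ n in atTop, f n ∈ s := by
  obtain ⟨n₀, hn₀⟩ := h.nonempty
  filter_upwards [eventually_ge_atTop n₀] with n hn
  obtain ⟨m, hm, hnm⟩ := h.exists_gt n
  rcases hf with hf | hf
  · exact hs.out hn₀ hm ⟨hf hn, hf hnm.le⟩
  · exact hs.out hm hn₀ ⟨hf hnm.le, hf hn⟩

theorem Antitone.Icc_succ_inter_Icc_succ_subsingleton {b : ℕ → α} (hb : Antitone b) {q q' : ℕ}
    (h : q < q') : (Icc (b (q + 1)) (b q) ∩ Icc (b (q' + 1)) (b q')).Subsingleton := by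
  have hle : b q' ≤ b (q + 1) := hb h
  have eq_left : ∀ z ∈ Icc (b (q + 1)) (b q) ∩ Icc (b (q' + 1)) (b q'), z = b (q + 1) :=
    fun z hz => le_antisymm (hz.2.2.trans hle) hz.1.1
  exact fun x hx y hy => (eq_left x hx).trans (eq_left y hy).symm

theorem Antitone.pairwise_Icc_succ_inter_subsingleton {b : ℕ → α} (hb : Antitone b) :
    Pairwise fun q q' => (Icc (b (q + 1)) (b q) ∩ Icc (b (q' + 1)) (b q')).Subsingleton := by
  intro q q' hne
  rcases hne.lt_or_gt with h | h
  · exact hb.Icc_succ_inter_Icc_succ_subsingleton h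
  · rw [inter_comm]
    exact hb.Icc_succ_inter_Icc_succ_subsingleton h

theorem subsingleton_setOf_infinite_preimage {f : ℕ → α} (hf : StrictMono f ∨ StrictAnti f)
    {I : ℕ → Set α} (hI : ∀ q, (I q).OrdConnected)
    (hdisj : Pairwise fun q q' => (I q ∩ I q').Subsingleton) :
    {q | (f ⁻¹' I q).Infinite}.Subsingleton := by
  have hmono : Monotone f ∨ Antitone f := hf.imp StrictMono.monotone StrictAnti.antitone
  have hinj : Function.Injective f := hf.elim StrictMono.injective StrictAnti.injective
  intro q hq q' hq'
  by_contra hne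
  obtain ⟨N, hN⟩ := eventually_atTop.1
    ((eventually_mem_of_infinite_preimage hmono (hI q) hq).and
      (eventually_mem_of_infinite_preimage hmono (hI q') hq'))
  have : f N = f (N + 1) := hdisj hne (hN N le_rfl) (hN (N + 1) N.le_succ)
  exact N.succ_ne_self (hinj this).symm

theorem Antitone.eventually_finite_Icc_succ {ι : Type*} [Finite ι] {s : ι → ℕ → α}
    (hs : ∀ i, StrictMono (s i) ∨ StrictAnti (s i)) (hcover : ∀ x, ∃ i n, s i n = x)
    {b : ℕ → α} (hb : Antitone b) : ∀ᶠ q in atTop, (Icc (b (q + 1)) (b q)).Finite := by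
  have hbad : {q | ∃ i, (s i ⁻¹' Icc (b (q + 1)) (b q)).Infinite}.Finite := by
    rw [ofPred_exists]
    exact finite_iUnion fun i =>
      (subsingleton_setOf_infinite_preimage (hs i) (fun _ => ordConnected_Icc)
        hb.pairwise_Icc_succ_inter_subsingleton).finite
  rw [← Nat.cofinite_eq_atTop]
  filter_upwards [hbad.eventually_cofinite_notMem] with q hq
  simp only [not_exists, not_infinite] at hq
  refine (finite_iUnion fun i => (hq i).image (s i)).subset fun x hx => ?_
  obtain ⟨i, n, rfl⟩ := hcover x
  exact mem_iUnion.2 ⟨i, n, hx, rfl⟩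

end Intervals

section AffineRoots

variable {W : Type*} {Φ₀ Φpos : Set W}

theorem affRoot_mem_affPos {γ : W} (hγ : γ ∈ Φ₀) (n : ℕ) :
    affRoot Φpos γ n ∈ AffPos Φ₀ Φpos := by
  by_cases h : γ ∈ Φpos
  · exact Or.inl ⟨γ, h, n, by simp [affRoot, h]⟩
  · exact Or.inr ⟨γ, ⟨hγ, h⟩, n, by simp [affRoot, h, add_comm]⟩

theorem affRoot_injective (γ : W) : Function.Injective (affRoot Φpos γ) := fun m n h => by
  simpa [affRoot] using congrArg Prod.snd h

theorem exists_affRoot_eq [AddCommGroup W] (hΦ₀ : Φ₀ = Φpos ∪ -Φpos) {z : W × ℝ}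
    (hz : z ∈ AffPos Φ₀ Φpos) :
    ∃ γ ∈ Φ₀, ∃ n : ℕ, affRoot Φpos γ n = z := by
  rcases hz with ⟨γ, hγ, n, rfl⟩ | ⟨γ, hγ, n, rfl⟩
  · exact ⟨γ, hΦ₀ ▸ Or.inl hγ, n, by simp [affRoot, hγ]⟩
  · exact ⟨γ, hγ.1, n, by simp [affRoot, hγ.2, add_comm]⟩

theorem affRoot_midpoint [AddCommGroup W] [Module ℝ W] (γ : W) (n : ℕ) :
    (1 / 2 : ℝ) • affRoot Φpos γ n + (1 / 2 : ℝ) • affRoot Φpos γ (n + 2) =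
      affRoot Φpos γ (n + 1) := by
  simp only [affRoot, Prod.smul_mk, Prod.mk_add_mk, Prod.mk.injEq, smul_eq_mul]
  constructor
  · module
  · push_cast; ring

theorem neg_mem_of_mem [AddCommGroup W] (hΦ₀ : Φ₀ = Φpos ∪ -Φpos) {γ : W} (hγ : γ ∈ Φ₀) :
    -γ ∈ Φ₀ := by
  rw [hΦ₀] at hγ ⊢
  exact hγ.symm.imp (by simp) (by simp)

theorem neg_mem_iff_notMem_of_mem [AddCommGroup W] (hΦ₀ : Φ₀ = Φpos ∪ -Φpos)
    (hdisj : Disjoint Φpos (-Φpos)) {γ : W} (hγ : γ ∈ Φ₀) : -γ ∈ Φpos ↔ γ ∉ Φpos := by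
  rw [hΦ₀] at hγ
  refine ⟨fun hn hp => disjoint_left.1 hdisj hp (by simpa using hn), fun hp => ?_⟩
  simpa [hp] using hγ

/-- `γ₀ + (−γ)₀ = δ`, written so that it exhibits `(−γ)₀ + δ` as a positive combination. -/
theorem affRoot_add_two_smul_affRoot_neg [AddCommGroup W] [Module ℝ W] {γ : W}
    (h : -γ ∈ Φpos ↔ γ ∉ Φpos) :
    affRoot Φpos γ 0 + (2 : ℝ) • affRoot Φpos (-γ) 0 = affRoot Φpos (-γ) 1 := by
  by_cases hγ : γ ∈ Φpos <;> simp only [affRoot, hγ, h, Prod.ext_iff] <;> norm_num <;> module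

end AffineRoots

namespace IsReflOrder

variable {Φ₀ Φpos : Set V} {r : V × ℝ → V × ℝ → Prop}

noncomputable abbrev linearOrder (hr : IsReflOrder Φ₀ Φpos r) :
    LinearOrder (AffPos Φ₀ Φpos) where
  le x y := r x y ∨ x = y
  lt x y := r x y
  le_refl _ := Or.inr rfl
  le_trans x y z hxy hyz := by
    rcases hxy with hxy | rfl
    · rcases hyz with hyz | rfl
      · exact Or.inl (hr.2.1 x x.2 y y.2 z z.2 hxy hyz)
      · exact Or.inl hxy
    · exact hyz
  lt_iff_le_not_ge x y := by
    refine ⟨fun hxy => ⟨Or.inl hxy, ?_⟩, fun ⟨hxy, hyx⟩ => hxy.resolve_right ?_⟩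
    · rintro (hyx | hyx)
      · exact hr.1 x x.2 (hr.2.1 x x.2 y y.2 x x.2 hxy hyx)
      · exact hr.1 x x.2 (hyx ▸ hxy)
    · intro hxy
      exact hyx (Or.inr hxy.symm)
  le_antisymm x y hxy hyx := by
    rcases hxy with hxy | rfl
    · rcases hyx with hyx | rfl
      · exact (hr.1 x x.2 (hr.2.1 x x.2 y y.2 x x.2 hxy hyx)).elim
      · rfl
    · rfl
  le_total x y := by
    by_cases h : x = y
    · exact Or.inl (Or.inr h)
    · exact (hr.2.2.1 x x.2 y y.2 fun hv => h (Subtype.ext hv)).imp Or.inl Or.inl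
  toDecidableLE := Classical.decRel _

theorem not_lt_of_lt_of_smul_add_smul_eq (hr : IsReflOrder Φ₀ Φpos r) {a b c : V × ℝ}
    (ha : a ∈ AffPos Φ₀ Φpos) (hb : b ∈ AffPos Φ₀ Φpos) (hc : c ∈ AffPos Φ₀ Φpos) {k₁ k₂ : ℝ}
    (hk₁ : 0 < k₁) (hk₂ : 0 < k₂) (habc : k₁ • a + k₂ • b = c) (hac : r a c) : ¬ r b c := by
  obtain ⟨hirr, htr, -, hbicl⟩ := hr
  intro hbc
  have hS : IsBiclosedIn (AffPos Φ₀ Φpos) {u ∈ AffPos Φ₀ Φpos | r u c} :=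
    hbicl _ (sep_subset _ _) fun x hx y hy hyx => ⟨hy, htr y hy x hx.1 c hc hyx hx.2⟩
  have hcS := hS.2.1 a ⟨ha, hac⟩ b ⟨hb, hbc⟩ k₁ k₂ hk₁ hk₂ (habc ▸ hc)
  exact hirr c hc (habc ▸ hcS).2

theorem not_gt_of_gt_of_smul_add_smul_eq (hr : IsReflOrder Φ₀ Φpos r) {a b c : V × ℝ}
    (ha : a ∈ AffPos Φ₀ Φpos) (hb : b ∈ AffPos Φ₀ Φpos) (hc : c ∈ AffPos Φ₀ Φpos) {k₁ k₂ : ℝ}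
    (hk₁ : 0 < k₁) (hk₂ : 0 < k₂) (habc : k₁ • a + k₂ • b = c) (hca : r c a) : ¬ r c b := by
  obtain ⟨hirr, htr, -, hbicl⟩ := hr
  intro hcb
  have hS : IsBiclosedIn (AffPos Φ₀ Φpos) {u ∈ AffPos Φ₀ Φpos | r u c ∨ u = c} := by
    refine hbicl _ (sep_subset _ _) fun x hx y hy hyx => ⟨hy, Or.inl ?_⟩
    rcases hx.2 with hxc | rfl
    · exact htr y hy x hx.1 c hc hyx hxc
    · exact hyx
  have hcompl : ∀ d ∈ AffPos Φ₀ Φpos, r c d →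
      d ∈ AffPos Φ₀ Φpos \ {u ∈ AffPos Φ₀ Φpos | r u c ∨ u = c} := by
    refine fun d hd hcd => ⟨hd, fun ⟨_, hdc⟩ => ?_⟩
    rcases hdc with hdc | rfl
    · exact hirr c hc (htr c hc d hd c hc hcd hdc)
    · exact hirr d hd hcd
  have hcS := hS.2.2 a (hcompl a ha hca) b (hcompl b hb hcb) k₁ k₂ hk₁ hk₂ (habc ▸ hc)
  exact (habc ▸ hcS).2 ⟨hc, Or.inr rfl⟩

theorem affRoot_strictMono_or_strictAnti (hr : IsReflOrder Φ₀ Φpos r) {γ : V} (hγ : γ ∈ Φ₀) :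
    (∀ m n : ℕ, m < n → r (affRoot Φpos γ m) (affRoot Φpos γ n)) ∨
      (∀ m n : ℕ, m < n → r (affRoot Φpos γ n) (affRoot Φpos γ m)) := by
  let := hr.linearOrder
  let x : ℕ → AffPos Φ₀ Φpos := fun n => ⟨affRoot Φpos γ n, affRoot_mem_affPos hγ n⟩
  have hmem (n : ℕ) : affRoot Φpos γ n ∈ AffPos Φ₀ Φpos := affRoot_mem_affPos hγ n
  have hne {m n : ℕ} (hmn : m ≠ n) : x m ≠ x n := fun h =>
    hmn (affRoot_injective γ (congrArg Subtype.val h))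
  have hmid (n : ℕ) := affRoot_midpoint (Φpos := Φpos) γ n
  have up (n : ℕ) (h : x n < x (n + 1)) : x (n + 1) < x (n + 2) :=
    (hne (n + 1).succ_ne_self.symm).lt_or_gt.resolve_right <| hr.not_lt_of_lt_of_smul_add_smul_eq (hmem n)
      (hmem (n + 2)) (hmem (n + 1)) one_half_pos one_half_pos (hmid n) h
  have down (n : ℕ) (h : x (n + 1) < x n) : x (n + 2) < x (n + 1) :=
    (hne (n + 1).succ_ne_self.symm).lt_or_gt.resolve_left <| hr.not_gt_of_gt_of_smul_add_smul_eq (hmem n)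
      (hmem (n + 2)) (hmem (n + 1)) one_half_pos one_half_pos (hmid n) h
  rcases (hne zero_ne_one).lt_or_gt with h₀ | h₀
  · have hstep (n : ℕ) : x n < x (n + 1) := by
      induction n with
      | zero => exact h₀
      | succ n ih => exact up n ih
    exact Or.inl fun m n hmn => strictMono_nat_of_lt_succ hstep hmn
  · have hstep (n : ℕ) : x (n + 1) < x n := by
      induction n with
      | zero => exact h₀
      | succ n ih => exact down n ih
    exact Or.inr fun m n hmn => strictAnti_nat_of_succ_lt hstep hmn

/-- Otherwise `(−α)₀ + δ = α₀ + 2 (−α)₀` would follow both `α₀` and `(−α)₀`. -/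
theorem affRoot_neg_strictAnti (hr : IsReflOrder Φ₀ Φpos r) (hΦ₀ : Φ₀ = Φpos ∪ -Φpos)
    (hdisj : Disjoint Φpos (-Φpos)) {α : V} (hα : α ∈ Φ₀)
    (hinit : ∀ m n : ℕ, r (affRoot Φpos α m) (affRoot Φpos (-α) n)) :
    ∀ m n : ℕ, m < n → r (affRoot Φpos (-α) n) (affRoot Φpos (-α) m) := by
  have hnα : -α ∈ Φ₀ := neg_mem_of_mem hΦ₀ hα
  refine (hr.affRoot_strictMono_or_strictAnti hnα).resolve_left fun hmono => ?_
  exact hr.not_lt_of_lt_of_smul_add_smul_eq (affRoot_mem_affPos hα 0)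
    (affRoot_mem_affPos hnα 0) (affRoot_mem_affPos hnα 1) one_pos two_pos
    (by simpa using affRoot_add_two_smul_affRoot_neg (neg_mem_iff_notMem_of_mem hΦ₀ hdisj hα))
    (hinit 0 1) (hmono 0 1 one_pos)

end IsReflOrder

/-- For a reflection order `≺` on `Φ⁺_W` and an initial root `α`
(all `α₀ + mδ` precede all `(−α)₀ + nδ`), there exists `p ≥ 0` such that for all
`q ≥ p` the closed interval `[(−α)₀ + (q+1)δ, (−α)₀ + qδ]` with respect to `≺`
is finite. -/
theorem stmt10 (Φ₀ Φpos : Set V) (hfin : Φ₀.Finite)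
    (hΦ₀ : Φ₀ = Φpos ∪ (-Φpos)) (hposdisj : Disjoint Φpos (-Φpos))
    (r : V × ℝ → V × ℝ → Prop) (hr : IsReflOrder Φ₀ Φpos r)
    (α : V) (hα : α ∈ Φ₀)
    (hinit : ∀ m n : ℕ, r (affRoot Φpos α m) (affRoot Φpos (-α) n)) :
    ∃ p : ℕ, ∀ q ≥ p,
      {z ∈ AffPos Φ₀ Φpos |
        (r (affRoot Φpos (-α) (q + 1)) z ∨ z = affRoot Φpos (-α) (q + 1)) ∧
        (r z (affRoot Φpos (-α) q) ∨ z = affRoot Φpos (-α) q)}.Finite := by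
  let := hr.linearOrder
  have := hfin.to_subtype
  let s (γ : Φ₀) (n : ℕ) : AffPos Φ₀ Φpos := ⟨affRoot Φpos γ n, affRoot_mem_affPos γ.2 n⟩
  have hcover (z : AffPos Φ₀ Φpos) : ∃ γ n, s γ n = z := by
    obtain ⟨γ, hγ, n, hz⟩ := exists_affRoot_eq hΦ₀ z.2
    exact ⟨⟨γ, hγ⟩, n, Subtype.ext hz⟩
  have hb : StrictAnti (s ⟨-α, neg_mem_of_mem hΦ₀ hα⟩) :=
    fun m n hmn => hr.affRoot_neg_strictAnti hΦ₀ hposdisj hα hinit m n hmn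
  have hs (γ : Φ₀) : StrictMono (s γ) ∨ StrictAnti (s γ) :=
    hr.affRoot_strictMono_or_strictAnti γ.2
  obtain ⟨p, hp⟩ := eventually_atTop.1 (hb.antitone.eventually_finite_Icc_succ hs hcover)
  refine ⟨p, fun q hq => ((hp q hq).image Subtype.val).subset ?_⟩
  rintro z ⟨hz, hlow, hupp⟩
  exact ⟨⟨z, hz⟩, ⟨hlow.imp_right fun h => Subtype.ext h.symm,
    hupp.imp_right fun h => Subtype.ext h⟩, rfl⟩
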